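/- Number of induced trees in a tree-shaped sum-product network: if the computational graph G is a rooted tree where each sum node S has children count K_S and each product node's subtrees are disjoint, then the number of induced trees of G equals the product, over an appropriate recursion, given by τ(L) = 1 for leaves, τ(P) = ∏_{C ∈ ch(P)} τ(C) for product nodes, and τ(S) = ∑_{C ∈ ch(S)} τ(C) for sum nodes; moreover the induced-tree probabilities p(Tᵢ) = ∏_{(S,N) ∈ T_{i,E}} w_{S,N} with normalized sum-weights satisfy ∑ᵢ₌₁^{τ(root)} p(Tᵢ) = 1. -/

import Mathlib

/-- A tree-shaped sum-product network: leaves, sum nodes (with finitely many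
weighted children) and product nodes (with finitely many children). -/
inductive SPN : Type
  | leaf : SPN
  | sum : (n : ℕ) → (Fin n → SPN) → (Fin n → ℝ) → SPN
  | prod : (n : ℕ) → (Fin n → SPN) → SPN

namespace SPN

/-- The recursive induced-tree count: `τ(L) = 1`, `τ(S) = ∑ τ(child)`,
`τ(P) = ∏ τ(child)`. -/
def τ : SPN → ℕ
  | .leaf => 1
  | .sum _ c _ => ∑ i, τ (c i)
  | .prod _ c => ∏ i, τ (c i)

/-- The type of induced trees of an SPN: an induced tree picks exactly one
child of every included sum node and all children of every included product
node. -/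
def IT : SPN → Type
  | .leaf => Unit
  | .sum _ c _ => Σ i, IT (c i)
  | .prod _ c => ∀ i, IT (c i)

/-- Induced trees form a finite type. -/
def ITFintype : (s : SPN) → Fintype (IT s)
  | .leaf => inferInstanceAs (Fintype Unit)
  | .sum _ c _ =>
      letI := fun i => ITFintype (c i)
      inferInstanceAs (Fintype (Σ i, IT (c i)))
  | .prod _ c =>
      letI := fun i => ITFintype (c i)
      inferInstanceAs (Fintype (∀ i, IT (c i)))

/-- The probability of an induced tree: the product of the sum-weights of the
edges it contains. -/
def prob : (s : SPN) → IT s → ℝ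
  | .leaf, _ => 1
  | .sum _ c w, t => w t.1 * prob (c t.1) t.2
  | .prod _ c, t => ∏ i, prob (c i) (t i)

/-- All sum-weights are nonnegative and normalized. -/
def Normalized : SPN → Prop
  | .leaf => True
  | .sum _ c w => (∀ i, 0 ≤ w i) ∧ (∑ i, w i = 1) ∧ ∀ i, Normalized (c i)
  | .prod _ c => ∀ i, Normalized (c i)

end SPN

/-- The number of induced trees of a tree-shaped SPN equals the recursive count
`τ`, and, with normalized sum-weights, the induced-tree probabilities sum
to 1. -/
theorem spn_induced_tree_count_and_normalization
    (s : SPN) (hs : s.Normalized) :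
    letI := SPN.ITFintype s
    Fintype.card (SPN.IT s) = s.τ ∧ ∑ t : SPN.IT s, s.prob t = 1 := by
  induction s with
  | leaf =>
      show Fintype.card Unit = 1 ∧ ∑ _t : Unit, (1 : ℝ) = 1
      simp
  | sum n c w ih =>
      obtain ⟨hw0, hw1, hn⟩ := hs
      letI := fun i => SPN.ITFintype (c i)
      constructor
      · show Fintype.card (Σ i, SPN.IT (c i)) = _
        rw [Fintype.card_sigma]
        exact Finset.sum_congr rfl fun i _ => (ih i (hn i)).1
      · show (∑ t : Σ i, SPN.IT (c i), w t.1 * SPN.prob (c t.1) t.2) = 1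
        rw [← Finset.univ_sigma_univ, Finset.sum_sigma]
        calc (∑ i : Fin n, ∑ t : SPN.IT (c i), w i * SPN.prob (c i) t)
            = ∑ i : Fin n, w i := by
              refine Finset.sum_congr rfl fun i _ => ?_
              rw [← Finset.mul_sum, (ih i (hn i)).2, mul_one]
          _ = 1 := hw1
  | prod n c ih =>
      letI := fun i => SPN.ITFintype (c i)
      constructor
      · show Fintype.card (∀ i, SPN.IT (c i)) = _
        rw [Fintype.card_pi]
        exact Finset.prod_congr rfl fun i _ => (ih i (hs i)).1
      · show (∑ t : ∀ i, SPN.IT (c i), ∏ i, SPN.prob (c i) (t i)) = 1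
        rw [← Fintype.prod_sum]
        exact Finset.prod_eq_one fun i _ => (ih i (hs i)).2
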